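/- Let M be a matroid with finitarization N. Then the following are equivalent: (1) there exists a matroid P with the same ground set whose independent sets are exactly the sets S such that S is independent in N and there exists T independent in M with T ⊆ S and S \ T finite (i.e. the near finitarization M^nfin is a matroid); (2) M is nearly finitary, i.e. for every base F of N and every base B of M with B ⊆ F, the set F \ B is finite. Moreover, when (2) holds, P = N, so M^nfin is a finitary matroid. -/

import Mathlib

/-!
Call `S` *nearly independent* if it is `N`-independent and has an `M`-independent subset with
finite complement in `S`. Both conditions of the theorem are equivalent to: every
`N`-independent set is nearly independent.

If the nearly independent sets are those of a matroid `P`, a `P`-basis of an `N`-independent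
set `S` is all of `S`, since adding one element keeps a set nearly independent. If instead `M` is
nearly finitary, extend `S` to an `N`-base `F`: an `M`-basis `B` of `F` is an `M`-base (an
element outside `M.closure B` could be added to `F` in `N`), so `S \ B` is finite. Finally, if an
`N`-base `F` is nearly independent via `T` and `B ⊆ F` is an `M`-base, then `B` differs finitely
from an `M`-base containing `T`, hence `F \ B` is finite.
-/

open Set

/-- `N` is the finitarization of `M`: same ground set, and a subset of the ground set is
independent in `N` iff all of its finite subsets are independent in `M`. -/
def IsFinitarization {α : Type*} (N M : Matroid α) : Prop :=
  N.E = M.E ∧ ∀ S ⊆ M.E, (N.Indep S ↔ ∀ J ⊆ S, J.Finite → M.Indep J)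

namespace Matroid

variable {α : Type*} {M N P : Matroid α}

lemma IsBase.sdiff_finite_of_indep_of_sdiff_finite {B F T : Set α} (hB : M.IsBase B)
    (hT : M.Indep T) (hBF : B ⊆ F) (hFT : (F \ T).Finite) : (F \ B).Finite := by
  obtain ⟨B', hB', hTB'⟩ := hT.exists_isBase_superset
  have hBB' : (B \ B').Finite := hFT.subset (sdiff_subset_sdiff hBF hTB')
  have hTB : (T \ B).Finite :=
    ((hB.sdiff_finite_comm hB').1 hBB').subset (sdiff_subset_sdiff_left hTB')
  refine (hFT.union hTB).subset fun y ⟨hyF, hyB⟩ => ?_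
  by_cases hyT : y ∈ T
  exacts [Or.inr ⟨hyT, hyB⟩, Or.inl ⟨hyF, hyT⟩]

lemma indep_of_forall_indep_iff_exists_sdiff_finite
    (hP : ∀ S, P.Indep S ↔ N.Indep S ∧ ∃ T, M.Indep T ∧ T ⊆ S ∧ (S \ T).Finite)
    {S : Set α} (hS : N.Indep S) : P.Indep S := by
  obtain ⟨I, hI⟩ := P.exists_isBasis' S
  obtain ⟨-, T, hT, hTI, hIT⟩ := (hP I).1 hI.indep
  suffices hSI : S ⊆ I from hI.subset.antisymm hSI ▸ hI.indep
  refine fun x hxS => hI.mem_of_insert_indep hxS ((hP _).2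
    ⟨hS.subset (insert_subset hxS hI.subset), T, hT, hTI.trans (subset_insert x I), ?_⟩)
  exact (hIT.insert x).subset insert_sdiff_subset

end Matroid

namespace IsFinitarization

open Matroid

variable {α : Type*} {M N : Matroid α}

lemma indep_of_indep (hfin : IsFinitarization N M) {S : Set α} (hS : M.Indep S) : N.Indep S :=
  (hfin.2 S hS.subset_ground).2 fun _ hJ _ => hS.subset hJ

lemma isBase_of_isBasis (hfin : IsFinitarization N M) {F B : Set α} (hF : N.IsBase F)
    (hB : M.IsBasis B F) : M.IsBase B := by
  obtain ⟨B', hB', hBB'⟩ := hB.indep.exists_isBase_superset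
  suffices hB'B : B' ⊆ B from hBB'.antisymm hB'B ▸ hB'
  intro x hxB'
  by_contra hxB
  have hxE : x ∈ M.E := hB'.subset_ground hxB'
  have hxcl : x ∉ M.closure B := (hB.indep.notMem_closure_iff_of_notMem hxB hxE).2
    (hB'.indep.subset (insert_subset hxB' hBB'))
  have hFE : F ⊆ M.E := hF.subset_ground.trans_eq hfin.1
  have hFfin : ∀ J ⊆ F, J.Finite → M.Indep J := (hfin.2 F hFE).1 hF.indep
  have hxF : N.Indep (insert x F) := by
    refine (hfin.2 _ (insert_subset hxE hFE)).2 fun J hJ hJfin => ?_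
    have hJF : J \ {x} ⊆ F := fun y ⟨hyJ, hyx⟩ => (hJ hyJ).resolve_left hyx
    have hxJ : x ∉ M.closure (J \ {x}) := fun h =>
      hxcl (M.closure_subset_closure_of_subset_closure (hJF.trans hB.subset_closure) h)
    exact ((hFfin _ hJF hJfin.sdiff).insert_indep_iff.2 (Or.inl ⟨hxE, hxJ⟩)).subset
      (subset_insert_sdiff_singleton x J)
  exact hxcl (hB.subset_closure (hF.mem_of_insert_indep hxF))

lemma exists_indep_sdiff_finite (hfin : IsFinitarization N M)
    (hM : ∀ F B, N.IsBase F → M.IsBase B → B ⊆ F → (F \ B).Finite) {S : Set α}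
    (hS : N.Indep S) : ∃ T, M.Indep T ∧ T ⊆ S ∧ (S \ T).Finite := by
  obtain ⟨F, hF, hSF⟩ := hS.exists_isBase_superset
  obtain ⟨B, hB⟩ := M.exists_isBasis F (hF.subset_ground.trans_eq hfin.1)
  have hFB : (F \ B).Finite := hM F B hF (hfin.isBase_of_isBasis hF hB) hB.subset
  exact ⟨S ∩ B, hB.indep.subset inter_subset_right, inter_subset_left,
    hFB.subset fun x ⟨hxS, hxB⟩ => ⟨hSF hxS, fun h => hxB ⟨hxS, h⟩⟩⟩

end IsFinitarization

/-- The near finitarization `M^nfin` (whose independent sets are the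
`N`-independent sets `S` with an `M`-independent subset `T ⊆ S` such that `S \ T` is finite,
where `N = M^fin`) is a matroid if and only if `M` is nearly finitary; moreover in that case
`M^nfin = N`, a finitary matroid. -/
theorem stmt_14 {α : Type*} (M N : Matroid α) (hfin : IsFinitarization N M) :
    ((∃ P : Matroid α, P.E = M.E ∧
        ∀ S, P.Indep S ↔ N.Indep S ∧ ∃ T, M.Indep T ∧ T ⊆ S ∧ (S \ T).Finite) ↔
      (∀ F B, N.IsBase F → M.IsBase B → B ⊆ F → (F \ B).Finite)) ∧
    ((∀ F B, N.IsBase F → M.IsBase B → B ⊆ F → (F \ B).Finite) →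
      ∀ S, (N.Indep S ∧ ∃ T, M.Indep T ∧ T ⊆ S ∧ (S \ T).Finite) ↔ N.Indep S) := by
  refine ⟨⟨?_, fun hM => ⟨N, hfin.1, fun S => ?_⟩⟩,
    fun hM S => ⟨And.left, fun hS => ⟨hS, hfin.exists_indep_sdiff_finite hM hS⟩⟩⟩
  · rintro ⟨P, -, hP⟩ F B hF hB hBF
    obtain ⟨-, T, hT, -, hFT⟩ :=
      (hP F).1 (Matroid.indep_of_forall_indep_iff_exists_sdiff_finite hP hF.indep)
    exact hB.sdiff_finite_of_indep_of_sdiff_finite hT hBF hFT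
  · exact ⟨fun hS => ⟨hS, hfin.exists_indep_sdiff_finite hM hS⟩, And.left⟩
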